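/- arXiv:1411.2712 — 4 statements merged into one kernel-verified Lean document; each statement's English description precedes it below -/
import Mathlib

section
/- Let J be a unital JB*-algebra and a, b ∈ J with a ⊥ b. Then a² ∘ b* = 0 and (a ∘ b*) ∘ a = 0. -/
/-- The triple product `{x,y,z} = (x∘y*)∘z + (z∘y*)∘x − (x∘z)∘y*` of a JB*-algebra. -/
noncomputable def tp {J : Type*} [NormedAddCommGroup J] [NormedSpace ℂ J]
    (jmul : J →L[ℂ] J →L[ℂ] J) (st : J → J) (x y z : J) : J :=
  jmul (jmul x (st y)) z + jmul (jmul z (st y)) x - jmul (jmul x z) (st y)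

/-- in a unital JB*-algebra, a ⊥ b implies a²∘b* = 0 and (a∘b*)∘a = 0. -/
theorem stmt8
    {J : Type*} [NormedAddCommGroup J] [NormedSpace ℂ J] [CompleteSpace J]
    (jmul : J →L[ℂ] J →L[ℂ] J)
    (hcomm : ∀ a b : J, jmul a b = jmul b a)
    (hjordan : ∀ a b : J, jmul (jmul a b) (jmul a a) = jmul a (jmul b (jmul a a)))
    (hnorm : ∀ a b : J, ‖jmul a b‖ ≤ ‖a‖ * ‖b‖)
    (st : J → J)
    (hst_inv : ∀ a : J, st (st a) = a)
    (hst_add : ∀ a b : J, st (a + b) = st a + st b)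
    (hst_smul : ∀ (r : ℂ) (a : J), st (r • a) = (starRingEnd ℂ r) • st a)
    (hst_mul : ∀ a b : J, st (jmul a b) = jmul (st a) (st b))
    (hst_norm : ∀ a : J, ‖st a‖ = ‖a‖)
    (hcstar : ∀ a : J,
      ‖jmul (jmul a (st a)) a + jmul (jmul a (st a)) a - jmul (jmul a a) (st a)‖ = ‖a‖ ^ 3)
    (e : J) (he : ∀ a : J, jmul e a = a)
    (a b : J)
    (horth : ∀ c : J, tp jmul st a b c = 0) :
    jmul (jmul a a) (st b) = 0 ∧ jmul (jmul a (st b)) a = 0 := by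
  have h1 : jmul a (st b) = 0 := by
    have h := horth e
    simp only [tp, he] at h
    rw [hcomm _ e, he, hcomm (st b) a, hcomm a e, he] at h
    simpa using h
  have h2 : jmul (jmul a a) (st b) = 0 := by
    have h := horth a
    simp only [tp, h1, map_zero, ContinuousLinearMap.zero_apply, zero_add, add_zero,
      zero_sub, neg_eq_zero] at h
    exact h
  exact ⟨h2, by simp [h1]⟩
end

section
/- Let J be a JB*-algebra and a, b ∈ J with a ⊥ b. Then for every c ∈ J, the element U_a(c) := {a, c*, a} = 2(a∘c)∘a − a²∘c is orthogonal to b. -/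
set_option maxHeartbeats 4000000 in
/-- in a JB*-algebra, if a ⊥ b then for every c the element U_a(c) = {a,c*,a} = 2(a∘c)∘a − a²∘c is orthogonal to b. -/
theorem stmt9
    {J : Type*} [NormedAddCommGroup J] [NormedSpace ℂ J] [CompleteSpace J]
    (jmul : J →L[ℂ] J →L[ℂ] J)
    (hcomm : ∀ a b : J, jmul a b = jmul b a)
    (hjordan : ∀ a b : J, jmul (jmul a b) (jmul a a) = jmul a (jmul b (jmul a a)))
    (hnorm : ∀ a b : J, ‖jmul a b‖ ≤ ‖a‖ * ‖b‖)
    (st : J → J)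
    (hst_inv : ∀ a : J, st (st a) = a)
    (hst_add : ∀ a b : J, st (a + b) = st a + st b)
    (hst_smul : ∀ (r : ℂ) (a : J), st (r • a) = (starRingEnd ℂ r) • st a)
    (hst_mul : ∀ a b : J, st (jmul a b) = jmul (st a) (st b))
    (hst_norm : ∀ a : J, ‖st a‖ = ‖a‖)
    (hcstar : ∀ a : J,
      ‖jmul (jmul a (st a)) a + jmul (jmul a (st a)) a - jmul (jmul a a) (st a)‖ = ‖a‖ ^ 3)
    (a b : J)
    (horth : ∀ c : J, tp jmul st a b c = 0) :
    ∀ c d : J, tp jmul st (2 • jmul (jmul a c) a - jmul (jmul a a) c) b d = 0 := by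
  intro c d
  -- the orthogonality hypothesis, unfolded
  have hH : ∀ x : J, (jmul (jmul a (st b)) x) + (jmul (jmul x (st b)) a) - (jmul (jmul a x) (st b)) = 0 := fun x => horth x
  -- fully linearized Jordan identity
  have lj : ∀ x y z w : J,
      (jmul (jmul x w) (jmul y z)) + (jmul (jmul y w) (jmul z x)) + (jmul (jmul z w) (jmul x y))
      - (jmul x (jmul w (jmul y z))) - (jmul y (jmul w (jmul z x))) - (jmul z (jmul w (jmul x y))) = 0 := by
    intro x y z w
    have q1 := hjordan (x + y + z) w
    have q2 := hjordan (x + y) w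
    have q3 := hjordan (y + z) w
    have q4 := hjordan (x + z) w
    have q5 := hjordan x w
    have q6 := hjordan y w
    have q7 := hjordan z w
    simp only [map_add, ContinuousLinearMap.add_apply] at q1 q2 q3 q4
    simp only [hcomm] at q1 q2 q3 q4 q5 q6 q7 ⊢
    linear_combination (norm := module) ((2:ℂ)⁻¹) • (q1 - q2 - q3 - q4 + q5 + q6 + q7)
  unfold tp
  simp only [two_smul, map_add, map_sub, ContinuousLinearMap.add_apply,
    ContinuousLinearMap.sub_apply]
  have h1 : (jmul (jmul a (st b)) d) + (jmul (jmul d (st b)) a) - (jmul (jmul a d) (st b)) = 0 := hH d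
  have h2 : (jmul (jmul a c) (jmul (jmul a (st b)) d)) + (jmul (jmul a c) (jmul (jmul d (st b)) a)) - (jmul (jmul a c) (jmul (jmul a d) (st b))) = 0 := by
    have := congrArg (fun t => jmul (jmul a c) t) h1
    simpa only [map_add, map_sub, map_zero] using this
  have h3 : (jmul (jmul a (st b)) c) + (jmul (jmul c (st b)) a) - (jmul (jmul a c) (st b)) = 0 := hH c
  have h4 : (jmul (jmul a d) (jmul (jmul a (st b)) c)) + (jmul (jmul a d) (jmul (jmul c (st b)) a)) - (jmul (jmul a d) (jmul (jmul a c) (st b))) = 0 := by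
    have := congrArg (fun t => jmul (jmul a d) t) h3
    simpa only [map_add, map_sub, map_zero] using this
  have h5 : (jmul (jmul a (st b)) a) + (jmul (jmul a (st b)) a) - (jmul (jmul a a) (st b)) = 0 := hH a
  have h6 : (jmul (jmul c d) (jmul (jmul a (st b)) a)) + (jmul (jmul c d) (jmul (jmul a (st b)) a)) - (jmul (jmul c d) (jmul (jmul a a) (st b))) = 0 := by
    have := congrArg (fun t => jmul (jmul c d) t) h5
    simpa only [map_add, map_sub, map_zero] using this
  have h7 : (jmul (jmul a (st b)) (jmul (jmul a c) d)) + (jmul (jmul (jmul (jmul a c) d) (st b)) a) - (jmul (jmul a (jmul (jmul a c) d)) (st b)) = 0 := hH (jmul (jmul a c) d)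
  have h8 : (jmul (jmul a (st b)) (jmul (jmul c d) a)) + (jmul (jmul (jmul (jmul c d) a) (st b)) a) - (jmul (jmul a (jmul (jmul c d) a)) (st b)) = 0 := hH (jmul (jmul c d) a)
  have h9 : (jmul (jmul a (st b)) (jmul a (jmul c d))) + (jmul (jmul a (st b)) (jmul (jmul c d) a)) + (jmul (jmul (jmul c d) (st b)) (jmul a a)) - (jmul a (jmul (st b) (jmul a (jmul c d)))) - (jmul a (jmul (st b) (jmul (jmul c d) a))) - (jmul (jmul c d) (jmul (st b) (jmul a a))) = 0 := lj a a (jmul c d) (st b)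
  have h10 : (jmul (jmul a d) (jmul a (jmul c (st b)))) + (jmul (jmul a d) (jmul (jmul c (st b)) a)) + (jmul (jmul (jmul c (st b)) d) (jmul a a)) - (jmul a (jmul d (jmul a (jmul c (st b))))) - (jmul a (jmul d (jmul (jmul c (st b)) a))) - (jmul (jmul c (st b)) (jmul d (jmul a a))) = 0 := lj a a (jmul c (st b)) d
  have h11 : (jmul (jmul a (jmul d (st b))) (jmul a c)) + (jmul (jmul a (jmul d (st b))) (jmul c a)) + (jmul (jmul c (jmul d (st b))) (jmul a a)) - (jmul a (jmul (jmul d (st b)) (jmul a c))) - (jmul a (jmul (jmul d (st b)) (jmul c a))) - (jmul c (jmul (jmul d (st b)) (jmul a a))) = 0 := lj a a c (jmul d (st b))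
  have h12 : (jmul (jmul a (jmul c (st b))) (jmul a d)) + (jmul (jmul a (jmul c (st b))) (jmul d a)) + (jmul (jmul d (jmul c (st b))) (jmul a a)) - (jmul a (jmul (jmul c (st b)) (jmul a d))) - (jmul a (jmul (jmul c (st b)) (jmul d a))) - (jmul d (jmul (jmul c (st b)) (jmul a a))) = 0 := lj a a d (jmul c (st b))
  have h13 : (jmul (jmul a d) (jmul c (jmul a (st b)))) + (jmul (jmul c d) (jmul (jmul a (st b)) a)) + (jmul (jmul (jmul a (st b)) d) (jmul a c)) - (jmul a (jmul d (jmul c (jmul a (st b))))) - (jmul c (jmul d (jmul (jmul a (st b)) a))) - (jmul (jmul a (st b)) (jmul d (jmul a c))) = 0 := lj a c (jmul a (st b)) d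
  have h14 : (jmul (jmul a (jmul a (st b))) (jmul c d)) + (jmul (jmul c (jmul a (st b))) (jmul d a)) + (jmul (jmul d (jmul a (st b))) (jmul a c)) - (jmul a (jmul (jmul a (st b)) (jmul c d))) - (jmul c (jmul (jmul a (st b)) (jmul d a))) - (jmul d (jmul (jmul a (st b)) (jmul a c))) = 0 := lj a c d (jmul a (st b))
  have h15 : (jmul (jmul a (jmul a d)) (jmul c (st b))) + (jmul (jmul c (jmul a d)) (jmul (st b) a)) + (jmul (jmul (st b) (jmul a d)) (jmul a c)) - (jmul a (jmul (jmul a d) (jmul c (st b)))) - (jmul c (jmul (jmul a d) (jmul (st b) a))) - (jmul (st b) (jmul (jmul a d) (jmul a c))) = 0 := lj a c (st b) (jmul a d)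
  have h16 : (jmul (jmul a (st b)) (jmul d (jmul a c))) + (jmul (jmul d (st b)) (jmul (jmul a c) a)) + (jmul (jmul (jmul a c) (st b)) (jmul a d)) - (jmul a (jmul (st b) (jmul d (jmul a c)))) - (jmul d (jmul (st b) (jmul (jmul a c) a))) - (jmul (jmul a c) (jmul (st b) (jmul a d))) = 0 := lj a d (jmul a c) (st b)
  have h17 : (jmul (jmul a (jmul a c)) (jmul d (st b))) + (jmul (jmul d (jmul a c)) (jmul (st b) a)) + (jmul (jmul (st b) (jmul a c)) (jmul a d)) - (jmul a (jmul (jmul a c) (jmul d (st b)))) - (jmul d (jmul (jmul a c) (jmul (st b) a))) - (jmul (st b) (jmul (jmul a c) (jmul a d))) = 0 := lj a d (st b) (jmul a c)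
  have h18 : (jmul (jmul a d) (jmul (st b) (jmul a c))) + (jmul (jmul (st b) d) (jmul (jmul a c) a)) + (jmul (jmul (jmul a c) d) (jmul a (st b))) - (jmul a (jmul d (jmul (st b) (jmul a c)))) - (jmul (st b) (jmul d (jmul (jmul a c) a))) - (jmul (jmul a c) (jmul d (jmul a (st b)))) = 0 := lj a (st b) (jmul a c) d
  have h19 : (jmul (jmul a a) (jmul (st b) (jmul c d))) + (jmul (jmul (st b) a) (jmul (jmul c d) a)) + (jmul (jmul (jmul c d) a) (jmul a (st b))) - (jmul a (jmul a (jmul (st b) (jmul c d)))) - (jmul (st b) (jmul a (jmul (jmul c d) a))) - (jmul (jmul c d) (jmul a (jmul a (st b)))) = 0 := lj a (st b) (jmul c d) a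
  have h20 : (jmul (jmul c a) (jmul d (jmul a (st b)))) + (jmul (jmul d a) (jmul (jmul a (st b)) c)) + (jmul (jmul (jmul a (st b)) a) (jmul c d)) - (jmul c (jmul a (jmul d (jmul a (st b))))) - (jmul d (jmul a (jmul (jmul a (st b)) c))) - (jmul (jmul a (st b)) (jmul a (jmul c d))) = 0 := lj c d (jmul a (st b)) a
  have h21 : (jmul (jmul c (jmul a a)) (jmul d (st b))) + (jmul (jmul d (jmul a a)) (jmul (st b) c)) + (jmul (jmul (st b) (jmul a a)) (jmul c d)) - (jmul c (jmul (jmul a a) (jmul d (st b)))) - (jmul d (jmul (jmul a a) (jmul (st b) c))) - (jmul (st b) (jmul (jmul a a) (jmul c d))) = 0 := lj c d (st b) (jmul a a)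
  have h22 : (jmul (jmul c d) (jmul (st b) (jmul a a))) + (jmul (jmul (st b) d) (jmul (jmul a a) c)) + (jmul (jmul (jmul a a) d) (jmul c (st b))) - (jmul c (jmul d (jmul (st b) (jmul a a)))) - (jmul (st b) (jmul d (jmul (jmul a a) c))) - (jmul (jmul a a) (jmul d (jmul c (st b)))) = 0 := lj c (st b) (jmul a a) d
  have h23 : (jmul (jmul c a) (jmul (st b) (jmul a d))) + (jmul (jmul (st b) a) (jmul (jmul a d) c)) + (jmul (jmul (jmul a d) a) (jmul c (st b))) - (jmul c (jmul a (jmul (st b) (jmul a d)))) - (jmul (st b) (jmul a (jmul (jmul a d) c))) - (jmul (jmul a d) (jmul a (jmul c (st b)))) = 0 := lj c (st b) (jmul a d) a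
  have h24 : (jmul (jmul d c) (jmul (st b) (jmul a a))) + (jmul (jmul (st b) c) (jmul (jmul a a) d)) + (jmul (jmul (jmul a a) c) (jmul d (st b))) - (jmul d (jmul c (jmul (st b) (jmul a a)))) - (jmul (st b) (jmul c (jmul (jmul a a) d))) - (jmul (jmul a a) (jmul c (jmul d (st b)))) = 0 := lj d (st b) (jmul a a) c
  have h25 : (jmul (jmul d a) (jmul (st b) (jmul a c))) + (jmul (jmul (st b) a) (jmul (jmul a c) d)) + (jmul (jmul (jmul a c) a) (jmul d (st b))) - (jmul d (jmul a (jmul (st b) (jmul a c)))) - (jmul (st b) (jmul a (jmul (jmul a c) d))) - (jmul (jmul a c) (jmul a (jmul d (st b)))) = 0 := lj d (st b) (jmul a c) a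
  have h26 : (jmul (jmul a (st b)) (jmul c d)) + (jmul (jmul (jmul c d) (st b)) a) - (jmul (jmul a (jmul c d)) (st b)) = 0 := hH (jmul c d)
  have h27 : (jmul a (jmul (jmul a (st b)) (jmul c d))) + (jmul a (jmul (jmul (jmul c d) (st b)) a)) - (jmul a (jmul (jmul a (jmul c d)) (st b))) = 0 := by
    have := congrArg (fun t => jmul a t) h26
    simpa only [map_add, map_sub, map_zero] using this
  have h28 : (jmul d (jmul (jmul a (st b)) c)) + (jmul d (jmul (jmul c (st b)) a)) - (jmul d (jmul (jmul a c) (st b))) = 0 := by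
    have := congrArg (fun t => jmul d t) h3
    simpa only [map_add, map_sub, map_zero] using this
  have h29 : (jmul a (jmul d (jmul (jmul a (st b)) c))) + (jmul a (jmul d (jmul (jmul c (st b)) a))) - (jmul a (jmul d (jmul (jmul a c) (st b)))) = 0 := by
    have := congrArg (fun t => jmul a t) h28
    simpa only [map_add, map_sub, map_zero] using this
  have h30 : (jmul (jmul a (st b)) (jmul a d)) + (jmul (jmul (jmul a d) (st b)) a) - (jmul (jmul a (jmul a d)) (st b)) = 0 := hH (jmul a d)
  have h31 : (jmul c (jmul (jmul a (st b)) (jmul a d))) + (jmul c (jmul (jmul (jmul a d) (st b)) a)) - (jmul c (jmul (jmul a (jmul a d)) (st b))) = 0 := by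
    have := congrArg (fun t => jmul c t) h30
    simpa only [map_add, map_sub, map_zero] using this
  have h32 : (jmul (jmul a a) (jmul d (st b))) + (jmul (jmul d a) (jmul (st b) a)) + (jmul (jmul (st b) a) (jmul a d)) - (jmul a (jmul a (jmul d (st b)))) - (jmul d (jmul a (jmul (st b) a))) - (jmul (st b) (jmul a (jmul a d))) = 0 := lj a d (st b) a
  have h33 : (jmul c (jmul (jmul a a) (jmul d (st b)))) + (jmul c (jmul (jmul d a) (jmul (st b) a))) + (jmul c (jmul (jmul (st b) a) (jmul a d))) - (jmul c (jmul a (jmul a (jmul d (st b))))) - (jmul c (jmul d (jmul a (jmul (st b) a)))) - (jmul c (jmul (st b) (jmul a (jmul a d)))) = 0 := by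
    have := congrArg (fun t => jmul c t) h32
    simpa only [map_add, map_sub, map_zero] using this
  have h34 : (jmul a (jmul (jmul a (st b)) d)) + (jmul a (jmul (jmul d (st b)) a)) - (jmul a (jmul (jmul a d) (st b))) = 0 := by
    have := congrArg (fun t => jmul a t) h1
    simpa only [map_add, map_sub, map_zero] using this
  have h35 : (jmul c (jmul a (jmul (jmul a (st b)) d))) + (jmul c (jmul a (jmul (jmul d (st b)) a))) - (jmul c (jmul a (jmul (jmul a d) (st b)))) = 0 := by
    have := congrArg (fun t => jmul c t) h34
    simpa only [map_add, map_sub, map_zero] using this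
  have h36 : (jmul d (jmul (jmul a (st b)) a)) + (jmul d (jmul (jmul a (st b)) a)) - (jmul d (jmul (jmul a a) (st b))) = 0 := by
    have := congrArg (fun t => jmul d t) h5
    simpa only [map_add, map_sub, map_zero] using this
  have h37 : (jmul c (jmul d (jmul (jmul a (st b)) a))) + (jmul c (jmul d (jmul (jmul a (st b)) a))) - (jmul c (jmul d (jmul (jmul a a) (st b)))) = 0 := by
    have := congrArg (fun t => jmul c t) h36
    simpa only [map_add, map_sub, map_zero] using this
  have h38 : (jmul (jmul a (st b)) (jmul a c)) + (jmul (jmul (jmul a c) (st b)) a) - (jmul (jmul a (jmul a c)) (st b)) = 0 := hH (jmul a c)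
  have h39 : (jmul d (jmul (jmul a (st b)) (jmul a c))) + (jmul d (jmul (jmul (jmul a c) (st b)) a)) - (jmul d (jmul (jmul a (jmul a c)) (st b))) = 0 := by
    have := congrArg (fun t => jmul d t) h38
    simpa only [map_add, map_sub, map_zero] using this
  have h40 : (jmul (jmul a c) (jmul a (st b))) + (jmul (jmul a c) (jmul (st b) a)) + (jmul (jmul (st b) c) (jmul a a)) - (jmul a (jmul c (jmul a (st b)))) - (jmul a (jmul c (jmul (st b) a))) - (jmul (st b) (jmul c (jmul a a))) = 0 := lj a a (st b) c
  have h41 : (jmul d (jmul (jmul a c) (jmul a (st b)))) + (jmul d (jmul (jmul a c) (jmul (st b) a))) + (jmul d (jmul (jmul (st b) c) (jmul a a))) - (jmul d (jmul a (jmul c (jmul a (st b))))) - (jmul d (jmul a (jmul c (jmul (st b) a)))) - (jmul d (jmul (st b) (jmul c (jmul a a)))) = 0 := by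
    have := congrArg (fun t => jmul d t) h40
    simpa only [map_add, map_sub, map_zero] using this
  have h42 : (jmul (jmul a a) (jmul c (st b))) + (jmul (jmul c a) (jmul (st b) a)) + (jmul (jmul (st b) a) (jmul a c)) - (jmul a (jmul a (jmul c (st b)))) - (jmul c (jmul a (jmul (st b) a))) - (jmul (st b) (jmul a (jmul a c))) = 0 := lj a c (st b) a
  have h43 : (jmul d (jmul (jmul a a) (jmul c (st b)))) + (jmul d (jmul (jmul c a) (jmul (st b) a))) + (jmul d (jmul (jmul (st b) a) (jmul a c))) - (jmul d (jmul a (jmul a (jmul c (st b))))) - (jmul d (jmul c (jmul a (jmul (st b) a)))) - (jmul d (jmul (st b) (jmul a (jmul a c)))) = 0 := by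
    have := congrArg (fun t => jmul d t) h42
    simpa only [map_add, map_sub, map_zero] using this
  have h44 : (jmul a (jmul (jmul a (st b)) c)) + (jmul a (jmul (jmul c (st b)) a)) - (jmul a (jmul (jmul a c) (st b))) = 0 := by
    have := congrArg (fun t => jmul a t) h3
    simpa only [map_add, map_sub, map_zero] using this
  have h45 : (jmul d (jmul a (jmul (jmul a (st b)) c))) + (jmul d (jmul a (jmul (jmul c (st b)) a))) - (jmul d (jmul a (jmul (jmul a c) (st b)))) = 0 := by
    have := congrArg (fun t => jmul d t) h44
    simpa only [map_add, map_sub, map_zero] using this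
  have h46 : (jmul c (jmul (jmul a (st b)) a)) + (jmul c (jmul (jmul a (st b)) a)) - (jmul c (jmul (jmul a a) (st b))) = 0 := by
    have := congrArg (fun t => jmul c t) h5
    simpa only [map_add, map_sub, map_zero] using this
  have h47 : (jmul d (jmul c (jmul (jmul a (st b)) a))) + (jmul d (jmul c (jmul (jmul a (st b)) a))) - (jmul d (jmul c (jmul (jmul a a) (st b)))) = 0 := by
    have := congrArg (fun t => jmul d t) h46
    simpa only [map_add, map_sub, map_zero] using this
  have h48 : (jmul (jmul a d) (jmul a c)) + (jmul (jmul a d) (jmul c a)) + (jmul (jmul c d) (jmul a a)) - (jmul a (jmul d (jmul a c))) - (jmul a (jmul d (jmul c a))) - (jmul c (jmul d (jmul a a))) = 0 := lj a a c d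
  have h49 : (jmul (st b) (jmul (jmul a d) (jmul a c))) + (jmul (st b) (jmul (jmul a d) (jmul c a))) + (jmul (st b) (jmul (jmul c d) (jmul a a))) - (jmul (st b) (jmul a (jmul d (jmul a c)))) - (jmul (st b) (jmul a (jmul d (jmul c a)))) - (jmul (st b) (jmul c (jmul d (jmul a a)))) = 0 := by
    have := congrArg (fun t => jmul (st b) t) h48
    simpa only [map_add, map_sub, map_zero] using this
  have h50 : (jmul (jmul a c) (jmul a d)) + (jmul (jmul a c) (jmul d a)) + (jmul (jmul d c) (jmul a a)) - (jmul a (jmul c (jmul a d))) - (jmul a (jmul c (jmul d a))) - (jmul d (jmul c (jmul a a))) = 0 := lj a a d c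
  have h51 : (jmul (st b) (jmul (jmul a c) (jmul a d))) + (jmul (st b) (jmul (jmul a c) (jmul d a))) + (jmul (st b) (jmul (jmul d c) (jmul a a))) - (jmul (st b) (jmul a (jmul c (jmul a d)))) - (jmul (st b) (jmul a (jmul c (jmul d a)))) - (jmul (st b) (jmul d (jmul c (jmul a a)))) = 0 := by
    have := congrArg (fun t => jmul (st b) t) h50
    simpa only [map_add, map_sub, map_zero] using this
  simp only [hcomm] at h1 h2 h3 h4 h5 h6 h7 h8 h9 h10 h11 h12 h13 h14 h15 h16 h17 h18 h19 h20 h21 h22 h23 h24 h25 h26 h27 h28 h29 h30 h31 h32 h33 h34 h35 h36 h37 h38 h39 h40 h41 h42 h43 h44 h45 h46 h47 h48 h49 h50 h51 ⊢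
  linear_combination (norm := module) (4 : ℂ) • h2 + (2 : ℂ) • h4 + (3 : ℂ) • h6 + (-4 : ℂ) • h7 + (-4 : ℂ) • h8 + (-4 : ℂ) • h9 + (-1 : ℂ) • h10 + (1 : ℂ) • h11 + (4 : ℂ) • h12 + (-2 : ℂ) • h13 + (4 : ℂ) • h14 + (-8 : ℂ) • h15 + (-4 : ℂ) • h16 + (-2 : ℂ) • h17 + (2 : ℂ) • h18 + (4 : ℂ) • h19 + (-4 : ℂ) • h20 + (-5 : ℂ) • h21 + (3 : ℂ) • h22 + (8 : ℂ) • h23 + (1 : ℂ) • h24 + (6 : ℂ) • h25 + (4 : ℂ) • h27 + (-2 : ℂ) • h29 + (4 : ℂ) • h31 + (-4 : ℂ) • h33 + (-4 : ℂ) • h35 + (-3 : ℂ) • h37 + (4 : ℂ) • h39 + (1 : ℂ) • h41 + (-2 : ℂ) • h43 + (-2 : ℂ) • h45 + (-1 : ℂ) • h47 + (-1 : ℂ) • h49 + (-4 : ℂ) • h51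
end

section
/- Let J be a Jordan Banach algebra, U an additive subgroup of J whose linear span is dense in J, and V : J × J → ℂ a continuous anti-symmetric bilinear form with V(a², a) = 0 for every a ∈ U. Then the bounded linear operator D_V : J → J*, D_V(a)(b) := V(a,b), is a Jordan derivation: D_V(a²) = 2 a ∘ D_V(a) for all a ∈ J, where (a∘φ)(b) := φ(a∘b). -/
/-- let `J` be a Jordan Banach algebra (a complex Banach space with a
continuous bilinear commutative product satisfying the Jordan identity and
`‖a∘b‖ ≤ ‖a‖‖b‖`), `U` an additive subgroup of `J` whose linear span is dense, and
`V : J × J → ℂ` a continuous anti-symmetric bilinear form with `V(a², a) = 0` for all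
`a ∈ U`. Then `D_V : J → J*`, `D_V(a)(b) = V(a,b)` is a Jordan derivation:
`D_V(a²) = 2 a ∘ D_V(a)`, i.e. pointwise `V(a∘a, b) = 2 V(a, a∘b)`. -/
theorem stmt12 {J : Type*} [NormedAddCommGroup J] [NormedSpace ℂ J] [CompleteSpace J]
    (jmul : J →L[ℂ] J →L[ℂ] J)
    (hcomm : ∀ a b : J, jmul a b = jmul b a)
    (hjordan : ∀ a b : J, jmul (jmul a b) (jmul a a) = jmul a (jmul b (jmul a a)))
    (hnorm : ∀ a b : J, ‖jmul a b‖ ≤ ‖a‖ * ‖b‖)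
    (U : AddSubgroup J)
    (hdense : Dense ((Submodule.span ℂ (U : Set J) : Submodule ℂ J) : Set J))
    (V : J →L[ℂ] J →L[ℂ] ℂ)
    (hanti : ∀ a b : J, V a b = - V b a)
    (hU : ∀ a ∈ U, V (jmul a a) a = 0) :
    ∀ a b : J, V (jmul a a) b = 2 * V a (jmul a b) := by
  -- extension lemma: a continuous linear functional vanishing on U vanishes
  have hext : ∀ f : J →L[ℂ] ℂ, (∀ x ∈ U, f x = 0) → ∀ x, f x = 0 := by
    intro f hf x
    have h2 : Set.EqOn f 0 ((Submodule.span ℂ (U : Set J) : Submodule ℂ J) : Set J) := by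
      intro y hy
      induction hy using Submodule.span_induction with
      | mem z hz => simpa using hf z hz
      | zero => simp
      | add u v hu hv hu' hv' =>
          show f (u + v) = 0
          rw [map_add, show f u = 0 from hu', show f v = 0 from hv', add_zero]
      | smul c u hu hu' =>
          show f (c • u) = 0
          rw [map_smul, show f u = 0 from hu', smul_zero]
    have h3 : (f : J → ℂ) = 0 :=
      Continuous.ext_on hdense f.continuous continuous_const h2
    exact congrFun h3 x
  -- step 1: for a, b ∈ U
  have step1 : ∀ a ∈ U, ∀ b ∈ U, V (jmul a a) b = 2 * V a (jmul a b) := by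
    intro a ha b hb
    have h1 := hU a ha
    have h2 := hU b hb
    have h3 := hU (a + b) (U.add_mem ha hb)
    have h4 := hU (a - b) (U.sub_mem ha hb)
    simp only [map_add, map_sub, ContinuousLinearMap.add_apply,
      ContinuousLinearMap.sub_apply, hcomm b a] at h3 h4
    have ha1 := hanti a (jmul a b)
    linear_combination (h3 - h4) / 2 - h2 - 2 * ha1
  -- step 2: for a ∈ U, all b
  have step2 : ∀ a ∈ U, ∀ b : J, V (jmul a a) b = 2 * V a (jmul a b) := by
    intro a ha b
    have := hext (V (jmul a a) - (2 : ℂ) • ((V a).comp (jmul a)))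
      (by intro x hx
          simp only [ContinuousLinearMap.sub_apply, ContinuousLinearMap.smul_apply,
            ContinuousLinearMap.comp_apply, smul_eq_mul]
          linear_combination step1 a ha x hx) b
    simp only [ContinuousLinearMap.sub_apply, ContinuousLinearMap.smul_apply,
      ContinuousLinearMap.comp_apply, smul_eq_mul] at this
    linear_combination this
  -- step 3: polarization on U
  have step3 : ∀ a ∈ U, ∀ c ∈ U, ∀ b : J,
      V (jmul a c) b - V a (jmul c b) - V c (jmul a b) = 0 := by
    intro a ha c hc b
    have h1 := step2 a ha b
    have h2 := step2 c hc b
    have h3 := step2 (a + c) (U.add_mem ha hc) b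
    simp only [map_add, ContinuousLinearMap.add_apply, hcomm c a] at h3
    linear_combination (h3 - h1 - h2) / 2
  -- step 4: extend first slot
  have step4 : ∀ c ∈ U, ∀ b : J, ∀ a : J,
      V (jmul a c) b - V a (jmul c b) - V c (jmul a b) = 0 := by
    intro c hc b a
    have := hext ((V.flip b).comp (jmul.flip c) - V.flip (jmul c b) - (V c).comp (jmul.flip b))
      (by intro x hx
          simpa [ContinuousLinearMap.sub_apply, ContinuousLinearMap.comp_apply,
            ContinuousLinearMap.flip_apply] using step3 x hx c hc b) a
    simpa [ContinuousLinearMap.sub_apply, ContinuousLinearMap.comp_apply,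
      ContinuousLinearMap.flip_apply] using this
  -- step 5: extend second slot
  have step5 : ∀ a : J, ∀ b : J, ∀ c : J,
      V (jmul a c) b - V a (jmul c b) - V c (jmul a b) = 0 := by
    intro a b c
    have := hext ((V.flip b).comp (jmul a) - (V a).comp (jmul.flip b) - V.flip (jmul a b))
      (by intro x hx
          simpa [ContinuousLinearMap.sub_apply, ContinuousLinearMap.comp_apply,
            ContinuousLinearMap.flip_apply] using step4 x hx b a) c
    simpa [ContinuousLinearMap.sub_apply, ContinuousLinearMap.comp_apply,
      ContinuousLinearMap.flip_apply] using this
  intro a b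
  have := step5 a b a
  linear_combination this
end

section
/- Let J be a JB*-algebra and G : J → J* a continuous generalized Jordan derivation with witness ξ = G**(1) ∈ J***. Let V_G(a,b) := G(a)(b). If p is a projection in J** and b ∈ J** satisfies p ⊥ b, then G**(p)(b*) = 0, where G** is the weak*-continuous extension of G. -/
/-- The topological dual of a seminormed space `E` (Mathlib's former `NormedSpace.Dual`). -/
abbrev NormedSpace.Dual (𝕜 : Type*) [NontriviallyNormedField 𝕜] (E : Type*)
    [SeminormedAddCommGroup E] [NormedSpace 𝕜 E] : Type _ := E →L[𝕜] 𝕜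

open NormedSpace

/-- `D(x∘y) = D(x)∘y + x∘D(y) − U_{x,y}(ξ)` for `D : V → V*`, with the module actions
`(D(x)∘y)(c) = D(x)(y∘c)` and `U_{x,y}(ξ)(c) = ξ(x∘(y∘c)) + ξ(y∘(x∘c)) − ξ((x∘y)∘c)`. -/
def IsGeneralizedJordanDerivation {𝕜 V : Type*} [NontriviallyNormedField 𝕜]
    [SeminormedAddCommGroup V] [NormedSpace 𝕜 V]
    (m : V →L[𝕜] V →L[𝕜] V) (D : V →ₗ[𝕜] Dual 𝕜 V) (ξ : Dual 𝕜 V) : Prop :=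
  ∀ x y : V, D (m x y) = (D x).comp (m y) + (D y).comp (m x) -
    ((ξ.comp (m x)).comp (m y) + (ξ.comp (m y)).comp (m x) - ξ.comp (m (m x y)))

theorem IsGeneralizedJordanDerivation.apply_eq_zero_of_idempotent_of_mul_eq_zero
    {𝕜 V : Type*} [NontriviallyNormedField 𝕜] [SeminormedAddCommGroup V] [NormedSpace 𝕜 V]
    {m : V →L[𝕜] V →L[𝕜] V} {D : V →ₗ[𝕜] Dual 𝕜 V} {ξ : Dual 𝕜 V}
    (hD : IsGeneralizedJordanDerivation m D ξ) {p c : V} (hp : m p p = p) (hpc : m p c = 0) :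
    D p c = 0 := by
  have h := congrArg (fun f : Dual 𝕜 V => f c) (hD p p)
  simpa [hp, hpc] using h

theorem tp_unit_right {J : Type*} [NormedAddCommGroup J] [NormedSpace ℂ J]
    {jmul : J →L[ℂ] J →L[ℂ] J} (hcomm : ∀ a b : J, jmul a b = jmul b a)
    {e : J} (he : ∀ a : J, jmul e a = a) (st : J → J) (x y : J) :
    tp jmul st x y e = jmul (st y) x := by
  simp only [tp, hcomm _ e, he, add_sub_cancel_left]

theorem stmt14_general {J : Type*} [NormedAddCommGroup J] [NormedSpace ℂ J]
    -- the Arens product `m2` on the bidual `J**`, extending the product of `J`: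
    (m2 : Dual ℂ (Dual ℂ J) →L[ℂ] Dual ℂ (Dual ℂ J) →L[ℂ] Dual ℂ (Dual ℂ J))
    (hm2comm : ∀ x y : Dual ℂ (Dual ℂ J), m2 x y = m2 y x)
    -- the involution on `J**` extending that of `J`:
    (st2 : Dual ℂ (Dual ℂ J) → Dual ℂ (Dual ℂ J))
    -- the unit of the JBW*-algebra `J**`:
    (e2 : Dual ℂ (Dual ℂ J)) (he2 : ∀ x, m2 e2 x = x)
    -- the generalized Jordan derivation `G` with witness `ξ ∈ J***`:
    (ξ : Dual ℂ (Dual ℂ (Dual ℂ J)))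
    -- the extension `G** : J** → J* ⊆ J***` of `G`:
    (G2 : Dual ℂ (Dual ℂ J) →ₗ[ℂ] Dual ℂ J)
    (hG2gen : ∀ x y : Dual ℂ (Dual ℂ J),
      inclusionInDoubleDual ℂ (Dual ℂ J) (G2 (m2 x y)) =
        (inclusionInDoubleDual ℂ (Dual ℂ J) (G2 x)).comp (m2 y) +
          (inclusionInDoubleDual ℂ (Dual ℂ J) (G2 y)).comp (m2 x) -
            ((ξ.comp (m2 x)).comp (m2 y) + (ξ.comp (m2 y)).comp (m2 x) -
              ξ.comp (m2 (m2 x y))))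
    -- a projection `p` in `J**` and `b ∈ J**` orthogonal to it:
    (p b : Dual ℂ (Dual ℂ J))
    (hp_idem : m2 p p = p)
    (horth : ∀ c : Dual ℂ (Dual ℂ J), tp m2 st2 p b c = 0) :
    st2 b (G2 p) = 0 := by
  have hG2 : IsGeneralizedJordanDerivation m2
      ((inclusionInDoubleDual ℂ (Dual ℂ J)).toLinearMap ∘ₗ G2) ξ := hG2gen
  have hpb : m2 p (st2 b) = 0 := by
    rw [hm2comm, ← tp_unit_right hm2comm he2 st2 p b]
    exact horth e2
  exact hG2.apply_eq_zero_of_idempotent_of_mul_eq_zero hp_idem hpb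

/-- let `J` be a JB*-algebra, `G : J → J*` a continuous generalized Jordan
derivation, `G** : J** → J* ⊆ J***` its (bidual) extension, with witness
`ξ = G**(1) ∈ J***`, satisfying the generalized Jordan derivation identity on `J**`
(with respect to the Arens extension `m2` of the product and the extension `st2` of the
involution).  If `p ∈ J**` is a projection and `b ∈ J**` satisfies `p ⊥ b`, then
`G**(p)(b*) = 0`. -/
theorem stmt14 {J : Type*} [NormedAddCommGroup J] [NormedSpace ℂ J] [CompleteSpace J]
    (jmul : J →L[ℂ] J →L[ℂ] J)
    (hcomm : ∀ a b : J, jmul a b = jmul b a)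
    (hjordan : ∀ a b : J, jmul (jmul a b) (jmul a a) = jmul a (jmul b (jmul a a)))
    (hnorm : ∀ a b : J, ‖jmul a b‖ ≤ ‖a‖ * ‖b‖)
    (st : J → J)
    (hst_inv : ∀ a : J, st (st a) = a)
    (hst_add : ∀ a b : J, st (a + b) = st a + st b)
    (hst_smul : ∀ (r : ℂ) (a : J), st (r • a) = (starRingEnd ℂ r) • st a)
    (hst_mul : ∀ a b : J, st (jmul a b) = jmul (st a) (st b))
    (hst_norm : ∀ a : J, ‖st a‖ = ‖a‖)
    (hcstar : ∀ a : J,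
      ‖jmul (jmul a (st a)) a + jmul (jmul a (st a)) a - jmul (jmul a a) (st a)‖ = ‖a‖ ^ 3)
    -- the Arens product `m2` on the bidual `J**`, extending the product of `J`:
    (m2 : Dual ℂ (Dual ℂ J) →L[ℂ] Dual ℂ (Dual ℂ J) →L[ℂ] Dual ℂ (Dual ℂ J))
    (hm2comm : ∀ x y : Dual ℂ (Dual ℂ J), m2 x y = m2 y x)
    (hm2jordan : ∀ x y : Dual ℂ (Dual ℂ J),
      m2 (m2 x y) (m2 x x) = m2 x (m2 y (m2 x x)))
    (hm2ext : ∀ a b : J,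
      m2 (inclusionInDoubleDual ℂ J a) (inclusionInDoubleDual ℂ J b) =
        inclusionInDoubleDual ℂ J (jmul a b))
    -- the involution on `J**` extending that of `J`:
    (st2 : Dual ℂ (Dual ℂ J) → Dual ℂ (Dual ℂ J))
    (hst2ext : ∀ a : J, st2 (inclusionInDoubleDual ℂ J a) = inclusionInDoubleDual ℂ J (st a))
    (hst2inv : ∀ x, st2 (st2 x) = x)
    (hst2add : ∀ x y, st2 (x + y) = st2 x + st2 y)
    (hst2mul : ∀ x y, st2 (m2 x y) = m2 (st2 x) (st2 y))
    -- the unit of the JBW*-algebra `J**`: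
    (e2 : Dual ℂ (Dual ℂ J)) (he2 : ∀ x, m2 e2 x = x)
    -- the generalized Jordan derivation `G` with witness `ξ ∈ J***`:
    (G : J →L[ℂ] Dual ℂ J)
    (ξ : Dual ℂ (Dual ℂ (Dual ℂ J)))
    (hGgen : ∀ a b : J,
      inclusionInDoubleDual ℂ (Dual ℂ J) (G (jmul a b)) =
        inclusionInDoubleDual ℂ (Dual ℂ J) ((G a).comp (jmul b)) +
          inclusionInDoubleDual ℂ (Dual ℂ J) ((G b).comp (jmul a)) -
            ((ξ.comp (m2 (inclusionInDoubleDual ℂ J a))).comp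
                (m2 (inclusionInDoubleDual ℂ J b)) +
              (ξ.comp (m2 (inclusionInDoubleDual ℂ J b))).comp
                (m2 (inclusionInDoubleDual ℂ J a)) -
              ξ.comp (m2 (inclusionInDoubleDual ℂ J (jmul a b)))))
    -- the extension `G** : J** → J* ⊆ J***` of `G`:
    (G2 : Dual ℂ (Dual ℂ J) →ₗ[ℂ] Dual ℂ J)
    (hG2ext : ∀ a : J, G2 (inclusionInDoubleDual ℂ J a) = G a)
    (hξ : ξ = inclusionInDoubleDual ℂ (Dual ℂ J) (G2 e2))
    (hG2gen : ∀ x y : Dual ℂ (Dual ℂ J),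
      inclusionInDoubleDual ℂ (Dual ℂ J) (G2 (m2 x y)) =
        (inclusionInDoubleDual ℂ (Dual ℂ J) (G2 x)).comp (m2 y) +
          (inclusionInDoubleDual ℂ (Dual ℂ J) (G2 y)).comp (m2 x) -
            ((ξ.comp (m2 x)).comp (m2 y) + (ξ.comp (m2 y)).comp (m2 x) -
              ξ.comp (m2 (m2 x y))))
    -- a projection `p` in `J**` and `b ∈ J**` orthogonal to it:
    (p b : Dual ℂ (Dual ℂ J))
    (hp_idem : m2 p p = p) (hp_sa : st2 p = p)
    (horth : ∀ c : Dual ℂ (Dual ℂ J), tp m2 st2 p b c = 0) :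
    st2 b (G2 p) = 0 :=
  stmt14_general m2 hm2comm st2 e2 he2 ξ G2 hG2gen p b hp_idem horth
end
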